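/- arXiv:1111.0332 — 4 statements merged into one kernel-verified Lean document; each statement's English description precedes it below -/
import Mathlib

section
/- Let X and X' be matrices in SL_2(C) with tr(X) = tr(X') = 0, and set ȳ = −tr(XX'). Then for every integer n ≥ 1, tr((XX')^{n+1}) − tr((X'X)^{n−1}) = (−1)^{n−1}·(ȳ² − 4)·S_{n−1}(ȳ), where S_n denotes the Chebyshev polynomials defined by S_0(y) = 1, S_1(y) = y, and S_{n+1}(y) = y·S_n(y) − S_{n−1}(y). -/
open Matrix

/-- The Chebyshev polynomials `S_n`, as functions `ℂ → ℂ`: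
`S_0(y) = 1`, `S_1(y) = y`, `S_{n+1}(y) = y·S_n(y) − S_{n−1}(y)`. -/
noncomputable def chebS : ℕ → ℂ → ℂ
  | 0 => fun _ => 1
  | 1 => fun y => y
  | (n + 2) => fun y => y * chebS (n + 1) y - chebS n y

lemma sl2_cayley_hamilton (A : Matrix (Fin 2) (Fin 2) ℂ) :
    A * A = Matrix.trace A • A - Matrix.det A • (1 : Matrix (Fin 2) (Fin 2) ℂ) := by
  ext i j
  fin_cases i <;> fin_cases j <;>
    simp [Matrix.mul_apply, Matrix.trace_fin_two, Matrix.det_fin_two, Fin.sum_univ_two,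
      Matrix.one_apply] <;> ring

lemma trace_pow_rec (A : Matrix (Fin 2) (Fin 2) ℂ) (hA : Matrix.det A = 1) (k : ℕ) :
    Matrix.trace (A ^ (k + 2)) =
      Matrix.trace A * Matrix.trace (A ^ (k + 1)) - Matrix.trace (A ^ k) := by
  have h : A ^ (k + 2) = Matrix.trace A • A ^ (k + 1) - A ^ k := by
    have h0 : A ^ (k + 2) = A ^ k * (A * A) := by rw [pow_add, pow_two]
    rw [h0, sl2_cayley_hamilton, hA, one_smul, mul_sub, mul_smul_comm, mul_one, pow_succ]
  rw [h, Matrix.trace_sub, Matrix.trace_smul, smul_eq_mul]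

/-- For traceless `X, X' ∈ SL₂(ℂ)` and `ȳ = −tr(XX')`, one has, for every `n ≥ 1`,
`tr((XX')^{n+1}) − tr((X'X)^{n−1}) = (−1)^{n−1}·(ȳ² − 4)·S_{n−1}(ȳ)`. -/
theorem sl2_delta_chebyshev (X X' : Matrix.SpecialLinearGroup (Fin 2) ℂ)
    (hX : Matrix.trace (X : Matrix (Fin 2) (Fin 2) ℂ) = 0)
    (hX' : Matrix.trace ((X' : Matrix (Fin 2) (Fin 2) ℂ)) = 0)
    (y : ℂ)
    (hy : y = -Matrix.trace ((X * X' : Matrix.SpecialLinearGroup (Fin 2) ℂ) :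
      Matrix (Fin 2) (Fin 2) ℂ))
    (n : ℕ) (hn : 1 ≤ n) :
    Matrix.trace (((X * X') ^ (n + 1) : Matrix.SpecialLinearGroup (Fin 2) ℂ) :
        Matrix (Fin 2) (Fin 2) ℂ) -
      Matrix.trace (((X' * X) ^ (n - 1) : Matrix.SpecialLinearGroup (Fin 2) ℂ) :
        Matrix (Fin 2) (Fin 2) ℂ) =
    (-1 : ℂ) ^ (n - 1) * (y ^ 2 - 4) * chebS (n - 1) y := by
  set A : Matrix (Fin 2) (Fin 2) ℂ := ((X * X' : Matrix.SpecialLinearGroup (Fin 2) ℂ) :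
    Matrix (Fin 2) (Fin 2) ℂ) with hAdef
  have hdet : Matrix.det A = 1 := (X * X').2
  have htr : Matrix.trace A = -y := by rw [hy, neg_neg]
  set p : ℕ → ℂ := fun k => Matrix.trace (A ^ k) with hp
  have hrec : ∀ k, p (k + 2) = -y * p (k + 1) - p k := by
    intro k
    simp only [hp]
    rw [trace_pow_rec A hdet k, htr]
  have hp0 : p 0 = 2 := by
    simp [hp, Matrix.trace_fin_two, Matrix.one_apply]
    norm_num
  have hp1 : p 1 = -y := by simpa [hp] using htr
  -- trace of (X'X)^m equals p m, by conjugation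
  have hconj : ∀ m : ℕ,
      Matrix.trace (((X' * X) ^ m : Matrix.SpecialLinearGroup (Fin 2) ℂ) :
        Matrix (Fin 2) (Fin 2) ℂ) = p m := by
    intro m
    have h1 : (X' * X : Matrix.SpecialLinearGroup (Fin 2) ℂ) = X⁻¹ * (X * X') * (X⁻¹)⁻¹ := by
      group
    have h2 : ((X' * X) ^ m : Matrix.SpecialLinearGroup (Fin 2) ℂ)
        = X⁻¹ * (X * X') ^ m * X := by
      rw [h1, conj_pow, inv_inv]
    rw [h2]
    have h3 : ((X⁻¹ * (X * X') ^ m * X : Matrix.SpecialLinearGroup (Fin 2) ℂ) :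
        Matrix (Fin 2) (Fin 2) ℂ)
        = (X⁻¹ : Matrix.SpecialLinearGroup (Fin 2) ℂ) * (A ^ m) *
          (X : Matrix (Fin 2) (Fin 2) ℂ) := by
      simp [hAdef, Matrix.SpecialLinearGroup.coe_pow]
    rw [h3, Matrix.trace_mul_comm, ← mul_assoc]
    have h4 : (X : Matrix (Fin 2) (Fin 2) ℂ) * (X⁻¹ : Matrix.SpecialLinearGroup (Fin 2) ℂ)
        = 1 := by
      rw [← Matrix.SpecialLinearGroup.coe_mul, mul_inv_cancel,
        Matrix.SpecialLinearGroup.coe_one]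
    rw [h4, one_mul]
  have hp2 : p 2 = y ^ 2 - 2 := by
    have h := hrec 0
    norm_num at h
    rw [h, hp1, hp0]; ring
  have hp3 : p 3 = -(y ^ 3) + 3 * y := by
    have h := hrec 1
    norm_num at h
    rw [h, hp2, hp1]; ring
  have key : ∀ m : ℕ, p (m + 2) - p m = (-1 : ℂ) ^ m * (y ^ 2 - 4) * chebS m y := by
    intro m
    induction m using Nat.twoStepInduction with
    | zero =>
      norm_num [hp2, hp0]
      simp [chebS]
      ring
    | one =>
      norm_num [hp3, hp1]
      simp [chebS]
      ring
    | more m ih1 ih2 =>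
      have e1 : p (m + 2 + 2) - p (m + 2) =
          -y * (p (m + 2 + 1) - p (m + 1)) - (p (m + 2) - p m) := by
        rw [hrec (m + 2), hrec m]; ring
      have e2 : p (m + 2 + 1) - p (m + 1) =
          (-1 : ℂ) ^ (m + 1) * (y ^ 2 - 4) * chebS (m + 1) y := by
        rw [show m + 2 + 1 = m + 1 + 2 by omega]
        exact ih2
      have e3 : chebS (m + 2) y = y * chebS (m + 1) y - chebS m y := rfl
      rw [e1, e2, ih1, e3, pow_succ, pow_succ]
      ring
  obtain ⟨m, rfl⟩ : ∃ m, n = m + 1 := ⟨n - 1, (Nat.succ_pred_eq_of_pos hn).symm⟩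
  have hsub : m + 1 - 1 = m := rfl
  rw [hsub, hconj m]
  have hcoe : Matrix.trace (((X * X') ^ (m + 1 + 1) : Matrix.SpecialLinearGroup (Fin 2) ℂ) :
      Matrix (Fin 2) (Fin 2) ℂ) = p (m + 2) := by
    simp only [hp]
    rw [Matrix.SpecialLinearGroup.coe_pow, ← hAdef]
  rw [hcoe]
  exact key m
end

section
/- Let p ≥ 1 and let q be an odd integer with 1 ≤ q < 2p and gcd(q, 2p) = 1. For 1 ≤ j ≤ 2p−1 set ε_j = (−1)^{⌊jq/(2p)⌋}. Let X, X' be matrices in SL_2(C) with tr(X) = tr(X') = 0, and let W = (X')^{ε_1}·X^{ε_2}·(X')^{ε_3}·⋯·X^{ε_{2p−2}}·(X')^{ε_{2p−1}} be the alternating word (letters with odd index are powers of X', letters with even index are powers of X). Let k be the number of indices j with 1 ≤ j ≤ 2p−2 such that ε_j = −1. Then X^{-1}·W·X·(X')^{-1} = (−1)^k·(XX')^{p+1} in SL_2(C). -/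
/-!
A traceless `A ∈ SL₂(ℂ)` satisfies `A² = -1` (Cayley–Hamilton), so `A⁻¹ = -A` and each letter
`A^{±1}` of `W` is `±A`. Hence, as a matrix, `W = (∏ ε_j) • (X'X)^{p-1} X'`. Because `q` is odd and
`q < 2p`, `⌊(2p-1)q/(2p)⌋ = q - 1` is even, so `ε_{2p-1} = 1` and `∏ ε_j = (-1)^k`. Finally
`X⁻¹ W X X'⁻¹ = (-1)^k · X (X'X)^{p-1} X' X X' = (-1)^k (XX')^{p+1}`.
-/

open Matrix

/-- The sign `ε_j = (−1)^{⌊jq/(2p)⌋}` appearing in the relator word of the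
two-bridge link `b(2p, q)`. -/
def twoBridgeSign (p q j : ℕ) : ℤ := (-1) ^ ((j * q) / (2 * p))

/-- The relator word `W = (X')^{ε_1}·X^{ε_2}·(X')^{ε_3}·⋯·X^{ε_{2p−2}}·(X')^{ε_{2p−1}}`:
letters with odd index are powers of `X'`, letters with even index are powers of `X`. -/
def twoBridgeWord (p q : ℕ) (X X' : Matrix.SpecialLinearGroup (Fin 2) ℂ) :
    Matrix.SpecialLinearGroup (Fin 2) ℂ :=
  ((List.range (2 * p - 1)).map fun i =>
    (if (i + 1) % 2 = 1 then X' else X) ^ twoBridgeSign p q (i + 1)).prod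

open scoped MatrixGroups

namespace Matrix.SpecialLinearGroup

variable {R : Type*} [CommRing R] {A : SL(2, R)}

theorem coe_inv_of_trace_eq_zero (hA : trace (A : Matrix (Fin 2) (Fin 2) R) = 0) :
    ((A⁻¹ : SL(2, R)) : Matrix (Fin 2) (Fin 2) R) = -A := by
  rw [trace_fin_two] at hA
  ext i j
  fin_cases i <;> fin_cases j <;> simp [SL2_inv_expl] <;> linear_combination hA

theorem coe_zpow_of_trace_eq_zero (hA : trace (A : Matrix (Fin 2) (Fin 2) R) = 0) {ε : ℤ}
    (hε : IsUnit ε) :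
    ((A ^ ε : SL(2, R)) : Matrix (Fin 2) (Fin 2) R) = (ε : R) • (A : Matrix (Fin 2) (Fin 2) R) := by
  rcases Int.isUnit_iff.mp hε with rfl | rfl
  · simp
  · simp [coe_inv_of_trace_eq_zero hA]

theorem coe_list_prod_map_zpow_of_trace_eq_zero {ι : Type*} (l : List ι) (g : ι → SL(2, R))
    (ε : ι → ℤ) (hg : ∀ i ∈ l, trace (g i : Matrix (Fin 2) (Fin 2) R) = 0)
    (hε : ∀ i ∈ l, IsUnit (ε i)) :
    (((l.map fun i => g i ^ ε i).prod : SL(2, R)) : Matrix (Fin 2) (Fin 2) R) =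
      ((l.map ε).prod : R) • (l.map fun i => (g i : Matrix (Fin 2) (Fin 2) R)).prod := by
  induction l with
  | nil => simp
  | cons a l ih =>
    simp only [List.forall_mem_cons] at hg hε
    simp only [List.map_cons, List.prod_cons, coe_mul, ih hg.2 hε.2,
      coe_zpow_of_trace_eq_zero hg.1 hε.1, Int.cast_mul, smul_mul_smul_comm]

end Matrix.SpecialLinearGroup

theorem Finset.prod_eq_neg_one_pow_card_filter {ι : Type*} (s : Finset ι) (f : ι → ℤ)
    (hf : ∀ i ∈ s, IsUnit (f i)) : ∏ i ∈ s, f i = (-1) ^ (s.filter (f · = -1)).card := by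
  have hf' : ∀ i ∈ s, f i = if f i = -1 then -1 else 1 := fun i hi => by
    rcases Int.isUnit_iff.mp (hf i hi) with h | h <;> simp [h]
  rw [Finset.prod_congr rfl hf', Finset.prod_ite, Finset.prod_const, Finset.prod_const, one_pow,
    mul_one]

theorem List.prod_map_range_alternating {M : Type*} [Monoid M] (a b : M) (m : ℕ) :
    ((List.range (2 * m + 1)).map fun i => if (i + 1) % 2 = 1 then b else a).prod =
      (b * a) ^ m * b := by
  induction m with
  | zero => simp
  | succ m ih =>
    rw [show 2 * (m + 1) + 1 = 2 * m + 1 + 1 + 1 by ring, List.prod_range_succ,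
      List.prod_range_succ, ih, if_neg (by omega), if_pos (by omega)]
    simp only [pow_succ, mul_assoc]

theorem twoBridgeSign_isUnit (p q j : ℕ) : IsUnit (twoBridgeSign p q j) :=
  isUnit_neg_one.pow _

/-- `(2p - 1) q = 2p (q - 1) + (2p - q)` with `0 < 2p - q < 2p`, so the floor is the even number
`q - 1`. -/
theorem twoBridgeSign_two_mul_sub_one {p q : ℕ} (hq : Odd q) (hq2 : q < 2 * p) :
    twoBridgeSign p q (2 * p - 1) = 1 := by
  obtain ⟨c, rfl⟩ := hq
  obtain ⟨d, hd⟩ : ∃ d, 2 * p = 2 * c + 1 + d + 1 := ⟨2 * p - 2 * c - 2, by omega⟩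
  have hdiv : (2 * p - 1) * (2 * c + 1) / (2 * p) = 2 * c := by
    apply Nat.div_eq_of_lt_le <;> rw [hd] <;> simp only [Nat.add_sub_cancel] <;> ring_nf <;> omega
  rw [twoBridgeSign, hdiv, pow_mul, neg_one_sq, one_pow]

theorem prod_twoBridgeSign {p q : ℕ} (hq : Odd q) (hq2 : q < 2 * p) :
    ((List.range (2 * p - 1)).map fun i => twoBridgeSign p q (i + 1)).prod =
      (-1) ^ ((Finset.Icc 1 (2 * p - 2)).filter fun j => twoBridgeSign p q j = -1).card := by
  have hIcc : ∏ i ∈ Finset.range (2 * p - 2), twoBridgeSign p q (i + 1) =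
      ∏ j ∈ Finset.Icc 1 (2 * p - 2), twoBridgeSign p q j := by
    rw [← Finset.Ico_add_one_right_eq_Icc, Finset.prod_Ico_eq_prod_range, Nat.add_sub_cancel]
    simp only [add_comm]
  rw [show 2 * p - 1 = 2 * p - 2 + 1 by omega, List.prod_range_succ,
    show 2 * p - 2 + 1 = 2 * p - 1 by omega, twoBridgeSign_two_mul_sub_one hq hq2, mul_one]
  change ∏ i ∈ Finset.range (2 * p - 2), twoBridgeSign p q (i + 1) = _
  rw [hIcc, Finset.prod_eq_neg_one_pow_card_filter _ _ fun j _ => twoBridgeSign_isUnit p q j]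

open Matrix.SpecialLinearGroup in
theorem coe_twoBridgeWord {p q : ℕ} (hq : Odd q) (hq2 : q < 2 * p)
    {X X' : Matrix.SpecialLinearGroup (Fin 2) ℂ}
    (hX : Matrix.trace (X : Matrix (Fin 2) (Fin 2) ℂ) = 0)
    (hX' : Matrix.trace (X' : Matrix (Fin 2) (Fin 2) ℂ) = 0) :
    (twoBridgeWord p q X X' : Matrix (Fin 2) (Fin 2) ℂ) =
      ((-1 : ℂ) ^ ((Finset.Icc 1 (2 * p - 2)).filter fun j => twoBridgeSign p q j = -1).card) •
        ((X' * X : Matrix (Fin 2) (Fin 2) ℂ) ^ (p - 1) * X') := by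
  have hletters : ∀ i ∈ List.range (2 * p - 1),
      trace (((if (i + 1) % 2 = 1 then X' else X : SL(2, ℂ))) : Matrix (Fin 2) (Fin 2) ℂ) = 0 :=
    fun i _ => by split <;> assumption
  rw [twoBridgeWord, coe_list_prod_map_zpow_of_trace_eq_zero _ _ _ hletters
    fun i _ => twoBridgeSign_isUnit p q (i + 1), prod_twoBridgeSign hq hq2]
  have hcoe : ∀ i : ℕ,
      (((if (i + 1) % 2 = 1 then X' else X : SL(2, ℂ))) : Matrix (Fin 2) (Fin 2) ℂ) =
        if (i + 1) % 2 = 1 then (X' : Matrix (Fin 2) (Fin 2) ℂ) else X :=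
    fun i => apply_ite _ _ _ _
  simp only [hcoe, show 2 * p - 1 = 2 * (p - 1) + 1 by omega, List.prod_map_range_alternating,
    Int.cast_pow, Int.cast_neg, Int.cast_one]

theorem mul_pow_mul_mul_mul {M : Type*} [Monoid M] (a b : M) (n : ℕ) :
    a * ((b * a) ^ n * b) * a * b = (a * b) ^ (n + 2) := by
  rw [← mul_assoc a, ← mul_pow_mul, pow_add, sq]
  simp only [mul_assoc]

open Matrix.SpecialLinearGroup in
theorem twoBridge_word_reduction'_general (p q : ℕ) (hq_odd : Odd q)
    (hq2 : q < 2 * p)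
    (X X' : Matrix.SpecialLinearGroup (Fin 2) ℂ)
    (hX : Matrix.trace (X : Matrix (Fin 2) (Fin 2) ℂ) = 0)
    (hX' : Matrix.trace ((X' : Matrix (Fin 2) (Fin 2) ℂ)) = 0)
    (k : ℕ)
    (hk : k = ((Finset.Icc 1 (2 * p - 2)).filter fun j => twoBridgeSign p q j = -1).card) :
    ((X⁻¹ * twoBridgeWord p q X X' * X * X'⁻¹ : Matrix.SpecialLinearGroup (Fin 2) ℂ) :
        Matrix (Fin 2) (Fin 2) ℂ) =
      ((-1 : ℂ) ^ k) • (((X * X') ^ (p + 1) : Matrix.SpecialLinearGroup (Fin 2) ℂ) :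
        Matrix (Fin 2) (Fin 2) ℂ) := by
  set A : Matrix (Fin 2) (Fin 2) ℂ := (X : Matrix (Fin 2) (Fin 2) ℂ)
  set B : Matrix (Fin 2) (Fin 2) ℂ := (X' : Matrix (Fin 2) (Fin 2) ℂ)
  rw [coe_mul, coe_mul, coe_mul, coe_inv_of_trace_eq_zero hX, coe_inv_of_trace_eq_zero hX',
    coe_twoBridgeWord hq_odd hq2 hX hX', ← hk, coe_pow, coe_mul]
  calc -A * ((-1 : ℂ) ^ k • ((B * A) ^ (p - 1) * B)) * A * -B
      = (-1 : ℂ) ^ k • (A * ((B * A) ^ (p - 1) * B) * A * B) := by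
        simp only [neg_mul, mul_neg, smul_neg, neg_neg, smul_mul_assoc, mul_smul_comm]
    _ = (-1 : ℂ) ^ k • (A * B) ^ (p + 1) := by
        rw [mul_pow_mul_mul_mul, show p - 1 + 2 = p + 1 by omega]

/-- For the two-bridge link `b(2p, q)` with `q` odd, `1 ≤ q < 2p`, `gcd(q, 2p) = 1`,
traceless `X, X' ∈ SL₂(ℂ)`, and `k` the number of `1 ≤ j ≤ 2p−2` with `ε_j = −1`,
one has `X⁻¹·W·X·(X')⁻¹ = (−1)^k·(XX')^{p+1}`. -/
theorem twoBridge_word_reduction' (p q : ℕ) (hp : 1 ≤ p) (hq_odd : Odd q)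
    (hq1 : 1 ≤ q) (hq2 : q < 2 * p) (hgcd : Nat.gcd q (2 * p) = 1)
    (X X' : Matrix.SpecialLinearGroup (Fin 2) ℂ)
    (hX : Matrix.trace (X : Matrix (Fin 2) (Fin 2) ℂ) = 0)
    (hX' : Matrix.trace ((X' : Matrix (Fin 2) (Fin 2) ℂ)) = 0)
    (k : ℕ)
    (hk : k = ((Finset.Icc 1 (2 * p - 2)).filter fun j => twoBridgeSign p q j = -1).card) :
    ((X⁻¹ * twoBridgeWord p q X X' * X * X'⁻¹ : Matrix.SpecialLinearGroup (Fin 2) ℂ) :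
        Matrix (Fin 2) (Fin 2) ℂ) =
      ((-1 : ℂ) ^ k) • (((X * X') ^ (p + 1) : Matrix.SpecialLinearGroup (Fin 2) ℂ) :
        Matrix (Fin 2) (Fin 2) ℂ) :=
  twoBridge_word_reduction'_general p q hq_odd hq2 X X' hX hX' k hk
end

section
/- (Fricke–Klein–Vogt) For every element w of the free group F_2 on two generators x and x', there exists a polynomial P ∈ Z[a, b, c] in three variables such that for every group homomorphism ρ : F_2 → SL_2(C), tr(ρ(w)) = P(tr ρ(x), tr ρ(x'), tr ρ(x·x')). -/
open Matrix MvPolynomial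
open scoped MatrixGroups

/-!
By Cayley–Hamilton, a matrix `M ∈ SL₂` satisfies `M² = (tr M) M - 1` and `M⁻¹ = (tr M) 1 - M`.
Hence for `A, B ∈ SL₂` the span of `1, A, B, AB` over the ring generated by `tr A`, `tr B`,
`tr AB` is closed under products and inverses, and the structure constants are integer
polynomials in these three traces. Every word in `A, B` is therefore a combination of
`1, A, B, AB` whose coefficients are universal integer polynomials in the traces, and so is its
trace.
-/

theorem Matrix.SpecialLinearGroup.coe_inv_eq_trace_smul_sub {R : Type*} [CommRing R]
    (M : SL(2, R)) :
    ((M⁻¹ : SL(2, R)) : Matrix (Fin 2) (Fin 2) R) =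
      trace (M : Matrix (Fin 2) (Fin 2) R) • 1 - M := by
  rw [SpecialLinearGroup.coe_inv, adjugate_fin_two]
  ext i j
  fin_cases i <;> fin_cases j <;> simp [trace_fin_two]

namespace SL2TraceCoordinates

variable {R S S' : Type*} [CommRing R] [CommRing S] [CommRing S']

def spanCombo (A B : Matrix (Fin 2) (Fin 2) R) (v : Fin 4 → R) : Matrix (Fin 2) (Fin 2) R :=
  v 0 • 1 + v 1 • A + v 2 • B + v 3 • (A * B)

def traceTriple (A B : Matrix (Fin 2) (Fin 2) R) : Fin 3 → R :=
  ![trace A, trace B, trace (A * B)]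

/-- Structure constants of the span of `1, A, B, AB` for `A, B ∈ SL₂` with
`t = (tr A, tr B, tr AB)`. -/
def comboMul (t : Fin 3 → S) (x y : Fin 4 → S) : Fin 4 → S :=
  ![x 0 * y 0 + x 2 * y 1 * (t 2 - t 0 * t 1) - x 1 * y 1 - t 1 * x 3 * y 1
      - x 2 * y 2 - t 0 * x 2 * y 3 - x 3 * y 3,
    x 0 * y 1 + x 1 * y 0 + t 0 * x 1 * y 1 + t 1 * x 2 * y 1 + t 2 * x 3 * y 1
      + x 2 * y 3 - x 3 * y 2,
    x 0 * y 2 + x 2 * y 0 + t 0 * x 2 * y 1 + t 1 * x 2 * y 2 + t 2 * x 2 * y 3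
      + x 3 * y 1 - x 1 * y 3,
    x 0 * y 3 + x 3 * y 0 + x 1 * y 2 + t 0 * x 1 * y 3 - x 2 * y 1 + t 1 * x 3 * y 2
      + t 2 * x 3 * y 3]

def comboTrace (t : Fin 3 → S) (x : Fin 4 → S) : S :=
  2 * x 0 + t 0 * x 1 + t 1 * x 2 + t 2 * x 3

def comboInv (t : Fin 3 → S) (x : Fin 4 → S) : Fin 4 → S :=
  ![comboTrace t x - x 0, -x 1, -x 2, -x 3]

section Naturality

variable {F : Type*} [FunLike F S S'] [RingHomClass F S S'] (f : F) (t : Fin 3 → S)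
  (x y : Fin 4 → S)

theorem map_comboMul : f ∘ comboMul t x y = comboMul (f ∘ t) (f ∘ x) (f ∘ y) := by
  ext i
  fin_cases i <;> simp [comboMul]

theorem map_comboTrace : f (comboTrace t x) = comboTrace (f ∘ t) (f ∘ x) := by
  simp [comboTrace, map_ofNat]

theorem map_comboInv : f ∘ comboInv t x = comboInv (f ∘ t) (f ∘ x) := by
  ext i
  fin_cases i <;> simp [comboInv, map_comboTrace]

end Naturality

variable {A B : Matrix (Fin 2) (Fin 2) R}

theorem spanCombo_mul_spanCombo (hA : A.det = 1) (hB : B.det = 1) (x y : Fin 4 → R) :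
    spanCombo A B x * spanCombo A B y = spanCombo A B (comboMul (traceTriple A B) x y) := by
  ext i j
  -- the coefficients of `det A`, `det B` in the product law for arbitrary 2×2 matrices
  linear_combination (norm := skip)
    (-(x 1 * y 1 + trace B * x 3 * y 1 + B.det * x 3 * y 3) * (1 : Matrix _ _ R) i j
      + (x 3 * y 1 - x 1 * y 3) * B i j) * hA
    + (-(x 2 * y 2 + trace A * x 2 * y 3 + x 3 * y 3) * (1 : Matrix _ _ R) i j
      + (x 2 * y 3 - x 3 * y 2) * A i j) * hB
  fin_cases i <;> fin_cases j <;>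
    simp [spanCombo, comboMul, traceTriple, mul_apply, trace_fin_two, det_fin_two,
      one_apply] <;>
    ring

theorem trace_spanCombo (x : Fin 4 → R) :
    trace (spanCombo A B x) = comboTrace (traceTriple A B) x := by
  simp [spanCombo, comboTrace, traceTriple, trace_add, trace_smul, mul_comm]

theorem coe_inv_eq_spanCombo {M : SL(2, R)} {x : Fin 4 → R}
    (hM : (M : Matrix (Fin 2) (Fin 2) R) = spanCombo A B x) :
    ((M⁻¹ : SL(2, R)) : Matrix (Fin 2) (Fin 2) R) =
      spanCombo A B (comboInv (traceTriple A B) x) := by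
  rw [SpecialLinearGroup.coe_inv_eq_trace_smul_sub, hM, trace_spanCombo]
  simp only [spanCombo, comboInv, cons_val]
  module

noncomputable def polySpanCombo (A B : Matrix (Fin 2) (Fin 2) R)
    (c : Fin 4 → MvPolynomial (Fin 3) ℤ) : Matrix (Fin 2) (Fin 2) R :=
  spanCombo A B (aeval (traceTriple A B) ∘ c)

theorem aeval_comp_X {σ K L : Type*} [CommSemiring K] [CommSemiring L] [Algebra K L]
    (t : σ → L) : aeval t ∘ (X : σ → MvPolynomial σ K) = t :=
  funext (aeval_X t)

theorem polySpanCombo_mul_polySpanCombo (hA : A.det = 1) (hB : B.det = 1)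
    (c d : Fin 4 → MvPolynomial (Fin 3) ℤ) :
    polySpanCombo A B c * polySpanCombo A B d = polySpanCombo A B (comboMul X c d) := by
  unfold polySpanCombo
  rw [spanCombo_mul_spanCombo hA hB, map_comboMul, aeval_comp_X]

theorem coe_inv_eq_polySpanCombo {M : SL(2, R)} {c : Fin 4 → MvPolynomial (Fin 3) ℤ}
    (hM : (M : Matrix (Fin 2) (Fin 2) R) = polySpanCombo A B c) :
    ((M⁻¹ : SL(2, R)) : Matrix (Fin 2) (Fin 2) R) = polySpanCombo A B (comboInv X c) := by
  rw [coe_inv_eq_spanCombo hM, polySpanCombo, map_comboInv, aeval_comp_X]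

theorem trace_polySpanCombo (c : Fin 4 → MvPolynomial (Fin 3) ℤ) :
    trace (polySpanCombo A B c) = aeval (traceTriple A B) (comboTrace X c) := by
  rw [polySpanCombo, trace_spanCombo, map_comboTrace, aeval_comp_X]

variable (R) in
def polyCoordWords : Subgroup (FreeGroup (Fin 2)) where
  carrier := {w | ∃ c : Fin 4 → MvPolynomial (Fin 3) ℤ,
    ∀ ρ : FreeGroup (Fin 2) →* SL(2, R),
      (ρ w : Matrix (Fin 2) (Fin 2) R) = polySpanCombo (ρ (.of 0)) (ρ (.of 1)) c}
  one_mem' := ⟨![1, 0, 0, 0], fun ρ => by simp [polySpanCombo, spanCombo]⟩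
  mul_mem' := by
    rintro w₁ w₂ ⟨c, hc⟩ ⟨d, hd⟩
    refine ⟨comboMul X c d, fun ρ => ?_⟩
    rw [_root_.map_mul, Matrix.SpecialLinearGroup.coe_mul, hc, hd,
      polySpanCombo_mul_polySpanCombo (ρ _).2 (ρ _).2]
  inv_mem' := by
    rintro w ⟨c, hc⟩
    exact ⟨comboInv X c, fun ρ => by rw [map_inv, coe_inv_eq_polySpanCombo (hc ρ)]⟩

variable (R) in
theorem polyCoordWords_eq_top : polyCoordWords R = ⊤ := by
  rw [eq_top_iff, ← FreeGroup.closure_range_of, Subgroup.closure_le]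
  rintro _ ⟨i, rfl⟩
  fin_cases i
  · exact ⟨![0, 1, 0, 0], fun ρ => by simp [polySpanCombo, spanCombo]⟩
  · exact ⟨![0, 0, 1, 0], fun ρ => by simp [polySpanCombo, spanCombo]⟩

end SL2TraceCoordinates

open SL2TraceCoordinates

/-- Fricke–Klein–Vogt: for every word `w` in the free group on two generators there is an
integer polynomial `P` in three variables such that for every representation
`ρ : F₂ → SL₂(ℂ)`, `tr(ρ(w)) = P(tr ρ(x), tr ρ(x'), tr ρ(x·x'))`. -/
theorem fricke_klein_vogt (w : FreeGroup (Fin 2)) :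
    ∃ P : MvPolynomial (Fin 3) ℤ,
      ∀ ρ : FreeGroup (Fin 2) →* Matrix.SpecialLinearGroup (Fin 2) ℂ,
        Matrix.trace ((ρ w : Matrix.SpecialLinearGroup (Fin 2) ℂ) :
            Matrix (Fin 2) (Fin 2) ℂ) =
          MvPolynomial.aeval
            ![Matrix.trace ((ρ (FreeGroup.of 0) : Matrix.SpecialLinearGroup (Fin 2) ℂ) :
                Matrix (Fin 2) (Fin 2) ℂ),
              Matrix.trace ((ρ (FreeGroup.of 1) : Matrix.SpecialLinearGroup (Fin 2) ℂ) :
                Matrix (Fin 2) (Fin 2) ℂ),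
              Matrix.trace ((ρ (FreeGroup.of 0 * FreeGroup.of 1) :
                Matrix.SpecialLinearGroup (Fin 2) ℂ) : Matrix (Fin 2) (Fin 2) ℂ)] P := by
  obtain ⟨c, hc⟩ : w ∈ polyCoordWords ℂ := polyCoordWords_eq_top ℂ ▸ Subgroup.mem_top w
  refine ⟨comboTrace X c, fun ρ => ?_⟩
  rw [hc ρ, trace_polySpanCombo, _root_.map_mul, Matrix.SpecialLinearGroup.coe_mul]
  rfl
end

section
/- For every triple (a, b, c) ∈ C³ there exist matrices A, B ∈ SL_2(C) with tr(A) = a, tr(B) = b, and tr(AB) = c. That is, the trace-coordinate map SL_2(C) × SL_2(C) → C³, (A, B) ↦ (tr A, tr B, tr AB), is surjective. -/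
open Matrix

/-- Take `μ` a root of `X² - cX + 1` and `ν = c - μ`. -/
theorem IsAlgClosed.exists_mul_eq_one_add_eq {K : Type*} [Field K] [IsAlgClosed K] (c : K) :
    ∃ μ ν : K, μ * ν = 1 ∧ μ + ν = c := by
  open Polynomial in
  obtain ⟨μ, hμ⟩ := IsAlgClosed.exists_root (C 1 * X ^ 2 + C (-c) * X + C 1)
    (by rw [degree_quadratic one_ne_zero]; decide)
  refine ⟨μ, c - μ, ?_, add_sub_cancel μ c⟩
  simp only [IsRoot, eval_add, eval_mul, eval_C, eval_pow, eval_X] at hμ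
  linear_combination -hμ

/-- `A = !![a, -1; 1, 0]` and `B = !![0, μ; -ν, b]` work: `A * B = !![ν, a * μ - b; 0, μ]`. -/
theorem Matrix.SpecialLinearGroup.exists_trace_eq_trace_eq_trace_mul_eq_add {R : Type*}
    [CommRing R] (a b : R) {μ ν : R} (hμν : μ * ν = 1) :
    ∃ A B : SpecialLinearGroup (Fin 2) R,
      trace (A : Matrix (Fin 2) (Fin 2) R) = a ∧ trace (B : Matrix (Fin 2) (Fin 2) R) = b ∧
      trace ((A * B : SpecialLinearGroup (Fin 2) R) : Matrix (Fin 2) (Fin 2) R) = μ + ν := by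
  let A : SpecialLinearGroup (Fin 2) R := ⟨!![a, -1; 1, 0], by simp [det_fin_two_of]⟩
  let B : SpecialLinearGroup (Fin 2) R := ⟨!![0, μ; -ν, b], by simp [det_fin_two_of, hμν]⟩
  refine ⟨A, B, ?_, ?_, ?_⟩
  · simp [A, trace_fin_two_of]
  · simp [B, trace_fin_two_of]
  · rw [coe_mul]
    simp [A, B, trace_fin_two_of, add_comm]

/-- For every `(a, b, c) ∈ ℂ³` there exist `A, B ∈ SL₂(ℂ)` with `tr A = a`, `tr B = b`,
and `tr(AB) = c`; i.e. the trace-coordinate map `SL₂(ℂ) × SL₂(ℂ) → ℂ³` is surjective. -/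
theorem sl2_trace_coordinates_surjective (a b c : ℂ) :
    ∃ A B : Matrix.SpecialLinearGroup (Fin 2) ℂ,
      Matrix.trace ((A : Matrix (Fin 2) (Fin 2) ℂ)) = a ∧
      Matrix.trace ((B : Matrix (Fin 2) (Fin 2) ℂ)) = b ∧
      Matrix.trace ((A * B : Matrix.SpecialLinearGroup (Fin 2) ℂ) :
        Matrix (Fin 2) (Fin 2) ℂ) = c := by
  obtain ⟨μ, ν, hμν, rfl⟩ := IsAlgClosed.exists_mul_eq_one_add_eq c
  exact SpecialLinearGroup.exists_trace_eq_trace_eq_trace_mul_eq_add a b hμν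
end
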